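/- For a gradient-flow trajectory of a two-layer ReLU network on an orthogonally separable dataset, starting from a balanced and live initialisation, with either the exponential or the logistic loss: for all i ∈ [n] and j ∈ [k], the function t ↦ sgn(a_j)·y_i·(w_j(t)^T x_i) is nondecreasing on [0,∞) (its derivative is ≥ 0 for almost every t). -/

import Mathlib

open MeasureTheory Filter Finset

/-- Euclidean inner product of real vectors. -/
noncomputable def dotp {m : ℕ} (u v : Fin m → ℝ) : ℝ := ∑ i, u i * v i

/-- Euclidean norm of a real vector. -/
noncomputable def norm2 {m : ℕ} (v : Fin m → ℝ) : ℝ := Real.sqrt (∑ i, v i ^ 2)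

/-- The ReLU function `ψ(u) = max{u, 0}`. -/
noncomputable def relu (u : ℝ) : ℝ := max u 0

/-- The two-layer ReLU network `N_θ(z) = Σ_j a_j ψ(w_jᵀ z)`. -/
noncomputable def net {d k : ℕ} (w : Fin k → Fin d → ℝ) (a : Fin k → ℝ)
    (z : Fin d → ℝ) : ℝ :=
  ∑ j, a j * relu (dotp (w j) z)

/-!
Along the flow, `⟨w_j', w_j⟩ = a_j' a_j` because `σ · u = ψ(u)` for any subgradient `σ` of the ReLU
at `u`; hence `a_j² - ‖w_j‖²` is constant, and balancedness persists: `|a_j| = ‖w_j‖`. This gives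
`|a_j'| ≤ C |a_j|` on bounded time intervals, so by Gronwall `a_j` cannot reach `0` and keeps its
sign. Finally `d/dt (sgn(a_j) y_i w_jᵀx_i) = Σ_{i'} (-ℓ') σ_{i'j} |a_j| y_i y_{i'} x_{i'}ᵀx_i ≥ 0`
by orthogonal separability. The flow is only absolutely continuous, so every derivative here is an
a.e. one, and every identity goes through the fundamental theorem of calculus for such functions.
-/

open Set

/-- Backward Gronwall: apply Gronwall's inequality to `τ ↦ ∫ r in b - τ..b, |f r|`. -/
theorem eq_zero_of_abs_le_mul_integral_abs {f : ℝ → ℝ} {C a b : ℝ} (hf : Continuous f)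
    (h : ∀ s ∈ Icc a b, |f s| ≤ C * ∫ r in s..b, |f r|) : ∀ s ∈ Icc a b, f s = 0 := by
  set G : ℝ → ℝ := fun τ => ∫ r in (b - τ)..b, |f r|
  have hG' : ∀ τ, HasDerivAt G |f (b - τ)| τ := by
    intro τ
    have := (intervalIntegral.integral_hasDerivAt_left (hf.abs.intervalIntegrable _ b)
      (hf.abs.stronglyMeasurableAtFilter _ _) hf.abs.continuousAt).comp τ
      ((hasDerivAt_id τ).const_sub b)
    simpa [Function.comp_def] using this
  have hG0 : ∀ τ ∈ Icc 0 (b - a), G τ = 0 := by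
    refine eq_zero_of_abs_deriv_le_mul_abs_self_of_eq_zero_right (K := C)
      (fun τ _ => (hG' τ).continuousAt.continuousWithinAt) (fun τ _ => (hG' τ).hasDerivWithinAt)
      (by simp [G]) fun τ hτ => ?_
    have hGnn : 0 ≤ G τ :=
      intervalIntegral.integral_nonneg (by linarith [hτ.1]) fun r _ => abs_nonneg _
    rw [Real.norm_eq_abs, Real.norm_eq_abs, abs_abs, abs_of_nonneg hGnn]
    simpa [G] using h (b - τ) ⟨by linarith [hτ.2], by linarith [hτ.1]⟩
  intro s hs
  have hGs := hG0 (b - s) ⟨by linarith [hs.2], by linarith [hs.1]⟩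
  simp only [G, sub_sub_cancel] at hGs
  simpa [hGs] using h s hs

theorem ContinuousOn.mul_pos_of_forall_ne_zero {u : ℝ → ℝ} {a b : ℝ}
    (hu : ContinuousOn u (uIcc a b)) (h : ∀ t ∈ uIcc a b, u t ≠ 0) : 0 < u a * u b := by
  by_contra! hab
  have h0 : (0 : ℝ) ∈ uIcc (u a) (u b) := by
    rcases mul_nonpos_iff.mp hab with h | h
    exacts [Set.mem_uIcc.mpr (Or.inr ⟨h.2, h.1⟩), Set.mem_uIcc.mpr (Or.inl h)]
  obtain ⟨t, ht, hut⟩ := intermediate_value_uIcc hu h0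
  exact h t ht hut

/-- `u` is locally absolutely continuous with a.e. derivative `u'`. -/
def IsPrimitive (u u' : ℝ → ℝ) : Prop :=
  (∀ t, IntervalIntegrable u' volume 0 t) ∧ ∀ t, u t = u 0 + ∫ s in (0:ℝ)..t, u' s

namespace IsPrimitive

variable {u v u' v' : ℝ → ℝ}

theorem intervalIntegrable (h : IsPrimitive u u') (a b : ℝ) :
    IntervalIntegrable u' volume a b :=
  (h.1 a).symm.trans (h.1 b)

theorem sub_eq_integral (h : IsPrimitive u u') (a b : ℝ) :
    u b - u a = ∫ t in a..b, u' t := by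
  rw [h.2 b, h.2 a, ← intervalIntegral.integral_add_adjacent_intervals (h.1 a)
    (h.intervalIntegrable a b)]
  ring

theorem continuous (h : IsPrimitive u u') : Continuous u :=
  (continuous_const.add (intervalIntegral.continuous_primitive h.intervalIntegrable 0)).congr
    fun t => (h.2 t).symm

theorem absolutelyContinuousOnInterval (h : IsPrimitive u u') (t : ℝ) :
    AbsolutelyContinuousOnInterval u 0 t := by
  have hac := (h.1 t).absolutelyContinuousOnInterval_intervalIntegral (c := 0) (by simp)
  rw [show u = fun t => u 0 + ∫ s in (0:ℝ)..t, u' s from funext h.2]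
  simpa [AbsolutelyContinuousOnInterval, dist_add_left] using hac

theorem ae_hasDerivAt (h : IsPrimitive u u') (t : ℝ) :
    ∀ᵐ s, s ∈ uIcc 0 t → HasDerivAt u (u' s) s := by
  filter_upwards [(h.1 t).ae_hasDerivAt_integral] with s hs hst
  rw [show u = fun t => u 0 + ∫ s in (0:ℝ)..t, u' s from funext h.2]
  exact (hs hst 0 (by simp)).const_add _

theorem of_sub_eq_integral (hu' : ∀ t, IntervalIntegrable u' volume 0 t)
    (hu : ∀ t, u t - u 0 = ∫ s in (0:ℝ)..t, u' s) : IsPrimitive u u' :=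
  ⟨hu', fun t => by linarith [hu t]⟩

theorem mul (hu : IsPrimitive u u') (hv : IsPrimitive v v') :
    IsPrimitive (fun t => u t * v t) (fun t => u' t * v t + u t * v' t) := by
  refine of_sub_eq_integral (fun t => ((hu.1 t).mul_continuousOn hv.continuous.continuousOn).add
    ((hv.1 t).continuousOn_mul hu.continuous.continuousOn)) fun t => ?_
  rw [← (hu.absolutelyContinuousOnInterval t).integral_deriv_mul_eq_sub
    (hv.absolutelyContinuousOnInterval t)]
  refine intervalIntegral.integral_congr_ae ?_
  filter_upwards [hu.ae_hasDerivAt t, hv.ae_hasDerivAt t] with s hus hvs hs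
  rw [(hus (uIoc_subset_uIcc hs)).deriv, (hvs (uIoc_subset_uIcc hs)).deriv]

theorem sub (hu : IsPrimitive u u') (hv : IsPrimitive v v') :
    IsPrimitive (fun t => u t - v t) (fun t => u' t - v' t) :=
  of_sub_eq_integral (fun t => (hu.1 t).sub (hv.1 t)) fun t => by
    rw [intervalIntegral.integral_sub (hu.1 t) (hv.1 t), ← hu.sub_eq_integral,
      ← hv.sub_eq_integral]
    ring

theorem mul_const (h : IsPrimitive u u') (c : ℝ) :
    IsPrimitive (fun t => u t * c) (fun t => u' t * c) :=
  of_sub_eq_integral (fun t => (h.1 t).mul_const c) fun t => by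
    rw [intervalIntegral.integral_mul_const, ← h.sub_eq_integral, sub_mul]

theorem sum {ι : Type*} (s : Finset ι) {u u' : ι → ℝ → ℝ}
    (h : ∀ i ∈ s, IsPrimitive (u i) (u' i)) :
    IsPrimitive (fun t => ∑ i ∈ s, u i t) (fun t => ∑ i ∈ s, u' i t) :=
  of_sub_eq_integral (fun t => by simpa only [Finset.sum_fn] using
      _root_.IntervalIntegrable.sum s fun i hi => (h i hi).1 t) fun t => by
    rw [intervalIntegral.integral_finsetSum fun i hi => (h i hi).1 t, ← Finset.sum_sub_distrib]
    exact Finset.sum_congr rfl fun i hi => (h i hi).sub_eq_integral 0 t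

theorem eq_of_ae_eq_zero {s : Set ℝ} [s.OrdConnected] (h : IsPrimitive u u')
    (hu' : ∀ᵐ t ∂volume.restrict s, u' t = 0) {a b : ℝ} (ha : a ∈ s) (hb : b ∈ s) :
    u a = u b := by
  suffices ∫ t in a..b, u' t = 0 by linarith [h.sub_eq_integral a b]
  rw [intervalIntegral.intervalIntegral_eq_integral_uIoc, integral_eq_zero_of_ae, smul_zero]
  exact ae_restrict_of_ae_restrict_of_subset
    (uIoc_subset_uIcc.trans (OrdConnected.uIcc_subset ‹_› ha hb)) hu'

theorem monotoneOn {s : Set ℝ} [s.OrdConnected] (h : IsPrimitive u u')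
    (hu' : ∀ᵐ t ∂volume.restrict s, 0 ≤ u' t) : MonotoneOn u s := by
  intro a ha b hb hab
  rw [← sub_nonneg, h.sub_eq_integral]
  exact intervalIntegral.integral_nonneg_of_ae_restrict hab
    (ae_restrict_of_ae_restrict_of_subset (Set.Icc_subset s ha hb) hu')

theorem eq_zero_of_abs_le_mul_abs (h : IsPrimitive u u') {C a b : ℝ} (hb : u b = 0)
    (hbound : ∀ᵐ t ∂volume.restrict (Icc a b), |u' t| ≤ C * |u t|) :
    ∀ s ∈ Icc a b, u s = 0 :=
  eq_zero_of_abs_le_mul_integral_abs h.continuous fun s hs => calc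
    |u s| = |∫ t in s..b, u' t| := by rw [← h.sub_eq_integral, hb, zero_sub, abs_neg]
    _ ≤ ∫ t in s..b, |u' t| := intervalIntegral.abs_integral_le_integral_abs hs.2
    _ ≤ ∫ t in s..b, C * |u t| :=
      intervalIntegral.integral_mono_ae_restrict hs.2 (h.intervalIntegrable s b).abs
        ((h.continuous.abs.intervalIntegrable s b).const_mul C)
        (ae_restrict_of_ae_restrict_of_subset (Icc_subset_Icc_left hs.1) hbound)
    _ = C * ∫ t in s..b, |u t| := intervalIntegral.integral_const_mul _ _

theorem mul_pos_of_abs_le_mul_abs (h : IsPrimitive u u') (h0 : u 0 ≠ 0)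
    (hbound : ∀ T, ∃ C, ∀ᵐ t ∂volume.restrict (Icc 0 T), |u' t| ≤ C * |u t|) {t : ℝ}
    (ht : 0 ≤ t) : 0 < u 0 * u t := by
  refine h.continuous.continuousOn.mul_pos_of_forall_ne_zero fun s hs hus => h0 ?_
  rw [uIcc_of_le ht] at hs
  obtain ⟨C, hC⟩ := hbound s
  exact h.eq_zero_of_abs_le_mul_abs hus hC 0 ⟨le_rfl, hs.1⟩

end IsPrimitive

theorem dotp_comm {m : ℕ} (u v : Fin m → ℝ) : dotp u v = dotp v u := by
  simp only [dotp, mul_comm]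

theorem abs_dotp_le {m : ℕ} (u v : Fin m → ℝ) : |dotp u v| ≤ norm2 u * norm2 v := by
  rw [norm2, norm2, ← Real.sqrt_mul (Finset.sum_nonneg fun i _ => sq_nonneg (u i))]
  exact Real.abs_le_sqrt (Finset.sum_mul_sq_le_sq_mul_sq _ _ _)

theorem abs_eq_norm2_iff {m : ℕ} (a : ℝ) (v : Fin m → ℝ) :
    |a| = norm2 v ↔ a * a = dotp v v := by
  rw [← Real.sqrt_mul_self_eq_abs, norm2, Real.sqrt_inj (mul_self_nonneg a)
    (Finset.sum_nonneg fun i _ => sq_nonneg (v i))]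
  simp only [dotp, sq]

theorem dotp_sum_mul {m n : ℕ} (x : Fin n → Fin m → ℝ) (r : Fin n → ℝ) (v : Fin m → ℝ) :
    dotp (fun c => ∑ i, r i * x i c) v = ∑ i, r i * dotp (x i) v := by
  simp only [dotp, Finset.sum_mul, Finset.mul_sum, mul_assoc]
  exact Finset.sum_comm

theorem mul_eq_relu {σ u : ℝ} (h0 : u < 0 → σ = 0) (h1 : 0 < u → σ = 1) : σ * u = relu u := by
  rcases lt_trichotomy u 0 with hu | rfl | hu
  · simp [h0 hu, relu, hu.le]
  · simp [relu]
  · simp [h1 hu, relu, hu.le]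

theorem abs_relu_le (u : ℝ) : |relu u| ≤ |u| := by
  rcases le_total u 0 with h | h <;> simp [relu, h]

theorem mul_mul_dotp_nonneg {d n : ℕ} {x : Fin n → Fin d → ℝ} {y : Fin n → ℝ}
    (hy : ∀ i, y i = 1 ∨ y i = -1)
    (hsep1 : ∀ i i', y i = y i' → 0 < dotp (x i) (x i'))
    (hsep2 : ∀ i i', y i ≠ y i' → dotp (x i) (x i') ≤ 0) (i i' : Fin n) :
    0 ≤ y i * y i' * dotp (x i) (x i') := by
  by_cases hii : y i = y i'
  · have : y i * y i' = 1 := by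
      rw [← hii]; rcases hy i with h | h <;> rw [h] <;> norm_num
    rw [this, one_mul]
    exact (hsep1 i i' hii).le
  · have : y i * y i' = -1 := by
      rcases hy i with h | h <;> rcases hy i' with h' | h' <;> simp [h, h'] at hii ⊢
    rw [this]
    linarith [hsep2 i i' hii]

/-- `(w', a')` is a gradient-flow velocity of the neuron `(w, a)`: `g i` stands for
`ℓ'(y_i N(x_i))` and `σ i` for the chosen subgradient of `ψ` at `wᵀx_i`. -/
def IsNeuronVelocity {d n : ℕ} (x : Fin n → Fin d → ℝ) (y g : Fin n → ℝ) (w w' : Fin d → ℝ)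
    (a a' : ℝ) : Prop :=
  ∃ σ : Fin n → ℝ, (∀ i, 0 ≤ σ i) ∧ (∀ i, dotp w (x i) < 0 → σ i = 0) ∧
    (∀ i, 0 < dotp w (x i) → σ i = 1) ∧ (∀ c, w' c = -∑ i, g i * y i * a * σ i * x i c) ∧
    a' = -∑ i, g i * y i * relu (dotp w (x i))

namespace IsNeuronVelocity

variable {d n : ℕ} {x : Fin n → Fin d → ℝ} {y g : Fin n → ℝ} {w w' : Fin d → ℝ} {a a' : ℝ}

theorem dotp_eq {σ : Fin n → ℝ} (hw' : ∀ c, w' c = -∑ i, g i * y i * a * σ i * x i c)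
    (v : Fin d → ℝ) : dotp w' v = -∑ i, g i * y i * a * σ i * dotp (x i) v := by
  have : w' = fun c => ∑ i, -(g i * y i * a * σ i) * x i c := by
    ext c; simp only [hw', neg_mul, Finset.sum_neg_distrib]
  rw [this, dotp_sum_mul]
  simp only [neg_mul, Finset.sum_neg_distrib]

theorem dotp_self (h : IsNeuronVelocity x y g w w' a a') : dotp w' w = a' * a := by
  obtain ⟨σ, -, hσ0, hσ1, hw', ha'⟩ := h
  rw [dotp_eq hw', ha', neg_mul, Finset.sum_mul]
  congr 1
  refine Finset.sum_congr rfl fun i _ => ?_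
  rw [← mul_eq_relu (hσ0 i) (hσ1 i), dotp_comm]
  ring

theorem abs_le (h : IsNeuronVelocity x y g w w' a a') :
    |a'| ≤ (∑ i, |g i| * |y i| * norm2 (x i)) * norm2 w := by
  obtain ⟨-, -, -, -, -, ha'⟩ := h
  rw [ha', abs_neg, Finset.sum_mul]
  refine (Finset.abs_sum_le_sum_abs _ _).trans (Finset.sum_le_sum fun i _ => ?_)
  calc |g i * y i * relu (dotp w (x i))| = |g i| * |y i| * |relu (dotp w (x i))| := by
        rw [abs_mul, abs_mul]
    _ ≤ |g i| * |y i| * (norm2 (x i) * norm2 w) := by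
        gcongr
        exact (abs_relu_le _).trans ((abs_dotp_le _ _).trans_eq (mul_comm _ _))
    _ = |g i| * |y i| * norm2 (x i) * norm2 w := by ring

theorem sign_mul_dotp_nonneg (h : IsNeuronVelocity x y g w w' a a') (hg : ∀ i, g i ≤ 0)
    (hsep : ∀ i i', 0 ≤ y i * y i' * dotp (x i) (x i')) {s : ℝ} (hs : 0 ≤ s * a) (i : Fin n) :
    0 ≤ s * y i * dotp w' (x i) := by
  obtain ⟨σ, hσ, -, -, hw', -⟩ := h
  rw [dotp_eq hw', mul_neg, ← neg_mul, Finset.mul_sum]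
  refine Finset.sum_nonneg fun i' _ => ?_
  have := mul_nonneg (mul_nonneg (neg_nonneg.mpr (hg i')) (hσ i')) (mul_nonneg hs (hsep i i'))
  rw [dotp_comm] at this
  linarith

end IsNeuronVelocity

structure IsNeuronFlow {d n : ℕ} (x : Fin n → Fin d → ℝ) (y : Fin n → ℝ) (g : ℝ → Fin n → ℝ)
    (w w' : ℝ → Fin d → ℝ) (a a' : ℝ → ℝ) : Prop where
  primitive_a : IsPrimitive a a'
  primitive_w : ∀ c, IsPrimitive (fun t => w t c) (fun t => w' t c)
  velocity :
    ∀ᵐ t ∂volume.restrict (Ici 0), IsNeuronVelocity x y (g t) (w t) (w' t) (a t) (a' t)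

namespace IsNeuronFlow

variable {d n : ℕ} {x : Fin n → Fin d → ℝ} {y : Fin n → ℝ} {g : ℝ → Fin n → ℝ}
  {w w' : ℝ → Fin d → ℝ} {a a' : ℝ → ℝ}

theorem primitive_dotp (hf : IsNeuronFlow x y g w w' a a') (v : Fin d → ℝ) :
    IsPrimitive (fun t => dotp (w t) v) (fun t => dotp (w' t) v) :=
  IsPrimitive.sum _ fun c _ => (hf.primitive_w c).mul_const (v c)

theorem primitive_dotp_self (hf : IsNeuronFlow x y g w w' a a') :
    IsPrimitive (fun t => dotp (w t) (w t)) (fun t => 2 * dotp (w' t) (w t)) := by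
  convert IsPrimitive.sum Finset.univ fun c _ =>
    (hf.primitive_w c).mul (hf.primitive_w c) using 1
  · rfl
  · funext t
    rw [dotp, Finset.mul_sum]
    exact Finset.sum_congr rfl fun c _ => by ring

theorem abs_eq_norm2 (hf : IsNeuronFlow x y g w w' a a') (h0 : |a 0| = norm2 (w 0)) {t : ℝ}
    (ht : 0 ≤ t) : |a t| = norm2 (w t) := by
  rw [abs_eq_norm2_iff] at h0 ⊢
  have hD := (hf.primitive_a.mul hf.primitive_a).sub hf.primitive_dotp_self
  have := hD.eq_of_ae_eq_zero (s := Ici 0) ?_ (mem_Ici.mpr le_rfl) (mem_Ici.mpr ht)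
  · linarith
  · filter_upwards [hf.velocity] with s hs
    rw [hs.dotp_self]
    ring

theorem mul_pos (hf : IsNeuronFlow x y g w w' a a') (hg : ∀ i, Continuous fun t => g t i)
    (h0 : |a 0| = norm2 (w 0)) (ha0 : a 0 ≠ 0) {t : ℝ} (ht : 0 ≤ t) : 0 < a 0 * a t := by
  refine hf.primitive_a.mul_pos_of_abs_le_mul_abs ha0 (fun T => ?_) ht
  have hK : Continuous fun t => ∑ i, |g t i| * |y i| * norm2 (x i) := by fun_prop
  obtain ⟨C, hC⟩ :=
    (isCompact_Icc (a := 0) (b := T)).exists_bound_of_continuousOn hK.continuousOn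
  refine ⟨C, ?_⟩
  filter_upwards [ae_restrict_of_ae_restrict_of_subset Icc_subset_Ici_self hf.velocity,
    ae_restrict_mem measurableSet_Icc] with s hs hsT
  calc |a' s| ≤ (∑ i, |g s i| * |y i| * norm2 (x i)) * norm2 (w s) := hs.abs_le
    _ = (∑ i, |g s i| * |y i| * norm2 (x i)) * |a s| := by rw [hf.abs_eq_norm2 h0 hsT.1]
    _ ≤ C * |a s| := by
      gcongr
      exact (le_abs_self _).trans (hC s hsT)

theorem monotoneOn_sign_mul_dotp (hf : IsNeuronFlow x y g w w' a a') (hg : ∀ t i, g t i ≤ 0)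
    (hsep : ∀ i i', 0 ≤ y i * y i' * dotp (x i) (x i')) {s : ℝ}
    (hs : ∀ t, 0 ≤ t → 0 ≤ s * a t) (i : Fin n) :
    MonotoneOn (fun t => s * y i * dotp (w t) (x i)) (Ici 0) := by
  simp_rw [mul_comm (s * y i)]
  refine ((hf.primitive_dotp (x i)).mul_const (s * y i)).monotoneOn ?_
  filter_upwards [hf.velocity, ae_restrict_mem measurableSet_Ici] with t ht ht0
  rw [mul_comm]
  exact ht.sign_mul_dotp_nonneg (hg t) hsep (hs t ht0) i

end IsNeuronFlow

theorem deriv_loss_nonpos_and_continuous {ℓ : ℝ → ℝ}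
    (hℓ : (ℓ = fun u => Real.exp (-u)) ∨ (ℓ = fun u => Real.log (1 + Real.exp (-u)))) :
    (∀ u, deriv ℓ u ≤ 0) ∧ Continuous (deriv ℓ) := by
  rcases hℓ with rfl | rfl
  · have hd : deriv (fun u => Real.exp (-u)) = fun u => -Real.exp (-u) :=
      funext fun u =>
        ((Real.hasDerivAt_exp (-u)).comp u (hasDerivAt_neg u)).deriv.trans (by simp)
    rw [hd]
    exact ⟨fun u => by simp [(Real.exp_pos _).le], by fun_prop⟩
  · have hd : deriv (fun u => Real.log (1 + Real.exp (-u)))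
        = fun u => -Real.exp (-u) / (1 + Real.exp (-u)) := by
      funext u
      have := (((Real.hasDerivAt_exp (-u)).comp u (hasDerivAt_neg u)).const_add 1).log
        (add_pos one_pos (Real.exp_pos _)).ne'
      simpa [Function.comp_def] using this.deriv
    rw [hd]
    exact ⟨fun u => div_nonpos_of_nonpos_of_nonneg (by simp [(Real.exp_pos _).le])
      (by positivity), by fun_prop (disch := intro u; positivity)⟩

theorem continuous_net {d k : ℕ} {w : ℝ → Fin k → Fin d → ℝ} {a : ℝ → Fin k → ℝ}
    (hw : ∀ j c, Continuous fun t => w t j c) (ha : ∀ j, Continuous fun t => a t j)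
    (z : Fin d → ℝ) : Continuous fun t => net (w t) (a t) z := by
  simp only [net, relu, dotp]
  fun_prop

theorem sign_mul_nonneg_of_mul_pos {a b : ℝ} (h : 0 < a * b) : 0 ≤ Real.sign a * b := by
  rcases lt_trichotomy a 0 with ha | rfl | ha
  · rw [Real.sign_of_neg ha]; nlinarith
  · simp
  · rw [Real.sign_of_pos ha]; nlinarith

theorem gradient_flow_inner_products_monotone_general
    (d n k : ℕ) (x : Fin n → Fin d → ℝ) (y : Fin n → ℝ)
    (hy : ∀ i, y i = 1 ∨ y i = -1)
    (hsep1 : ∀ i i', y i = y i' → 0 < dotp (x i) (x i'))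
    (hsep2 : ∀ i i', y i ≠ y i' → dotp (x i) (x i') ≤ 0)
    (ℓ : ℝ → ℝ)
    (hℓ : (ℓ = fun u => Real.exp (-u)) ∨ (ℓ = fun u => Real.log (1 + Real.exp (-u))))
    (w : ℝ → Fin k → Fin d → ℝ) (a : ℝ → Fin k → ℝ)
    (w' : ℝ → Fin k → Fin d → ℝ) (a' : ℝ → Fin k → ℝ)
    (hwInt : ∀ (j : Fin k) (i : Fin d) (t : ℝ),
      IntervalIntegrable (fun s => w' s j i) volume 0 t)
    (haInt : ∀ (j : Fin k) (t : ℝ), IntervalIntegrable (fun s => a' s j) volume 0 t)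
    (hwFTC : ∀ (t : ℝ) (j : Fin k) (i : Fin d),
      w t j i = w 0 j i + ∫ s in (0:ℝ)..t, w' s j i)
    (haFTC : ∀ (t : ℝ) (j : Fin k), a t j = a 0 j + ∫ s in (0:ℝ)..t, a' s j)
    (hODE : ∀ᵐ t ∂(volume.restrict (Set.Ici (0:ℝ))),
      ∃ σ : Fin n → Fin k → ℝ,
        (∀ i j, 0 ≤ σ i j ∧ σ i j ≤ 1) ∧
        (∀ i j, dotp (w t j) (x i) < 0 → σ i j = 0) ∧
        (∀ i j, 0 < dotp (w t j) (x i) → σ i j = 1) ∧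
        (∀ j ic, w' t j ic =
          -∑ i, deriv ℓ (y i * net (w t) (a t) (x i)) * y i * a t j * σ i j * x i ic) ∧
        (∀ j, a' t j =
          -∑ i, deriv ℓ (y i * net (w t) (a t) (x i)) * y i * relu (dotp (w t j) (x i))))
    (hbal : ∀ j, |a 0 j| = norm2 (w 0 j) ∧ a 0 j ≠ 0) :
    ∀ (i : Fin n) (j : Fin k),
      MonotoneOn (fun t => Real.sign (a 0 j) * y i * dotp (w t j) (x i)) (Set.Ici (0:ℝ)) := by
  intro i j
  obtain ⟨hℓ_nonpos, hℓ_cont⟩ := deriv_loss_nonpos_and_continuous hℓ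
  have hw : ∀ j c, IsPrimitive (fun t => w t j c) (fun t => w' t j c) :=
    fun j c => ⟨hwInt j c, fun t => hwFTC t j c⟩
  have ha : ∀ j, IsPrimitive (fun t => a t j) (fun t => a' t j) :=
    fun j => ⟨haInt j, fun t => haFTC t j⟩
  have hflow : IsNeuronFlow x y (fun t i => deriv ℓ (y i * net (w t) (a t) (x i)))
      (fun t => w t j) (fun t => w' t j) (fun t => a t j) (fun t => a' t j) :=
    ⟨ha j, hw j, hODE.mono fun t ⟨σ, hσ, hσ0, hσ1, hw', ha'⟩ =>
      ⟨fun i => σ i j, fun i => (hσ i j).1, fun i => hσ0 i j, fun i => hσ1 i j, hw' j, ha' j⟩⟩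
  have hg : ∀ i, Continuous fun t => deriv ℓ (y i * net (w t) (a t) (x i)) := fun i =>
    hℓ_cont.comp (continuous_const.mul
      (continuous_net (fun j c => (hw j c).continuous) (fun j => (ha j).continuous) (x i)))
  refine hflow.monotoneOn_sign_mul_dotp (fun t i => hℓ_nonpos _)
    (mul_mul_dotp_nonneg hy hsep1 hsep2) (fun t ht => ?_) i
  exact sign_mul_nonneg_of_mul_pos (hflow.mul_pos hg (hbal j).1 (hbal j).2 ht)

/-- for all `i` and `j`, the function `t ↦ sgn(a_j) y_i (w_j(t)ᵀ x_i)` is nondecreasing on `[0, ∞)`. -/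
theorem gradient_flow_inner_products_monotone
    (d n k : ℕ) (x : Fin n → Fin d → ℝ) (y : Fin n → ℝ)
    (hy : ∀ i, y i = 1 ∨ y i = -1)
    (hsep1 : ∀ i i', y i = y i' → 0 < dotp (x i) (x i'))
    (hsep2 : ∀ i i', y i ≠ y i' → dotp (x i) (x i') ≤ 0)
    (ℓ : ℝ → ℝ)
    (hℓ : (ℓ = fun u => Real.exp (-u)) ∨ (ℓ = fun u => Real.log (1 + Real.exp (-u))))
    (w : ℝ → Fin k → Fin d → ℝ) (a : ℝ → Fin k → ℝ)
    (w' : ℝ → Fin k → Fin d → ℝ) (a' : ℝ → Fin k → ℝ)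
    (hwInt : ∀ (j : Fin k) (i : Fin d) (t : ℝ),
      IntervalIntegrable (fun s => w' s j i) volume 0 t)
    (haInt : ∀ (j : Fin k) (t : ℝ), IntervalIntegrable (fun s => a' s j) volume 0 t)
    (hwFTC : ∀ (t : ℝ) (j : Fin k) (i : Fin d),
      w t j i = w 0 j i + ∫ s in (0:ℝ)..t, w' s j i)
    (haFTC : ∀ (t : ℝ) (j : Fin k), a t j = a 0 j + ∫ s in (0:ℝ)..t, a' s j)
    (hODE : ∀ᵐ t ∂(volume.restrict (Set.Ici (0:ℝ))),
      ∃ σ : Fin n → Fin k → ℝ,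
        (∀ i j, 0 ≤ σ i j ∧ σ i j ≤ 1) ∧
        (∀ i j, dotp (w t j) (x i) < 0 → σ i j = 0) ∧
        (∀ i j, 0 < dotp (w t j) (x i) → σ i j = 1) ∧
        (∀ j ic, w' t j ic =
          -∑ i, deriv ℓ (y i * net (w t) (a t) (x i)) * y i * a t j * σ i j * x i ic) ∧
        (∀ j, a' t j =
          -∑ i, deriv ℓ (y i * net (w t) (a t) (x i)) * y i * relu (dotp (w t j) (x i))))
    (hbal : ∀ j, |a 0 j| = norm2 (w 0 j) ∧ a 0 j ≠ 0)
    (hlive : ∀ s : ℝ, s = 1 ∨ s = -1 →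
      ∃ i j, y i = s ∧ 0 < y i * a 0 j * relu (dotp (w 0 j) (x i))) :
    ∀ (i : Fin n) (j : Fin k),
      MonotoneOn (fun t => Real.sign (a 0 j) * y i * dotp (w t j) (x i)) (Set.Ici (0:ℝ)) :=
  gradient_flow_inner_products_monotone_general d n k x y hy hsep1 hsep2 ℓ hℓ w a w' a' hwInt haInt
    hwFTC haFTC hODE hbal
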